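/- Let u, ρ, S, T be smooth fields on ℝ × ℝ³ with ρ > 0 everywhere, and set ω = ∇×u. Assume the vorticity equation ∂ω/∂t − ∇×(u×ω) = ∇T × ∇S and the mass continuity equation ∂ρ/∂t + ∇·(ρu) = 0. Then (∂/∂t + u·∇)(ω/ρ) − ((ω/ρ)·∇)u = (∇T × ∇S)/ρ. -/

import Mathlib

/-!
Write `ω = ∇×u` and `D = ∂/∂t + u·∇`. The identity
`∇×(u×ω) = u (∇·ω) - ω (∇·u) + (ω·∇)u - (u·∇)ω` together with `∇·ω = 0`
turns the vorticity equation into `Dω - (ω·∇)u = -(∇·u) ω + ∇T×∇S`, and the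
continuity equation reads `Dρ = -ρ ∇·u`. By the product rule
`D(ω/ρ) = Dω/ρ - (Dρ/ρ²) ω`, so the two `∇·u` terms cancel.
-/

noncomputable section

/-- Vectors in ℝ³. -/
abbrev Vec3 : Type := Fin 3 → ℝ

/-- Points of space-time: `(t, x)` with `t : ℝ`, `x : Fin 3 → ℝ`. -/
abbrev Pt : Type := ℝ × Vec3

/-- Euclidean dot product on ℝ³. -/
def dot3 (a b : Vec3) : ℝ := ∑ i, a i * b i

/-- Cross product on ℝ³. -/
def cross3 (a b : Vec3) : Vec3 :=
  ![a 1 * b 2 - a 2 * b 1, a 2 * b 0 - a 0 * b 2, a 0 * b 1 - a 1 * b 0]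

/-- Spatial partial derivative ∂f/∂xᵢ of a scalar field. -/
def pd (i : Fin 3) (f : Pt → ℝ) (p : Pt) : ℝ :=
  fderiv ℝ (fun x => f (p.1, x)) p.2 (Pi.single i 1)

/-- Time derivative ∂f/∂t of a scalar field. -/
def dt (f : Pt → ℝ) (p : Pt) : ℝ := deriv (fun s => f (s, p.2)) p.1

/-- Time derivative of a vector field, componentwise. -/
def dtVec (F : Pt → Vec3) (p : Pt) : Vec3 := fun i => dt (fun q => F q i) p

/-- Spatial gradient ∇f of a scalar field. -/
def grad3 (f : Pt → ℝ) (p : Pt) : Vec3 := fun i => pd i f p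

/-- Spatial divergence ∇·F of a vector field. -/
def div3 (F : Pt → Vec3) (p : Pt) : ℝ := ∑ i, pd i (fun q => F q i) p

/-- Spatial curl ∇×F of a vector field. -/
def curl3 (F : Pt → Vec3) (p : Pt) : Vec3 :=
  ![pd 1 (fun q => F q 2) p - pd 2 (fun q => F q 1) p,
    pd 2 (fun q => F q 0) p - pd 0 (fun q => F q 2) p,
    pd 0 (fun q => F q 1) p - pd 1 (fun q => F q 0) p]

/-- Directional derivative (u·∇)f of a scalar field. -/
def dirD (u : Pt → Vec3) (f : Pt → ℝ) (p : Pt) : ℝ := ∑ i, u p i * pd i f p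

/-- Directional derivative (u·∇)F of a vector field. -/
def dirDVec (u F : Pt → Vec3) (p : Pt) : Vec3 :=
  fun j => ∑ i, u p i * pd i (fun q => F q j) p

/-- (∇u)ᵀ·A, the vector with i-th component ∑ⱼ (∂uʲ/∂xⁱ) Aⱼ. -/
def gradTdot (u A : Pt → Vec3) (p : Pt) : Vec3 :=
  fun i => ∑ j, pd i (fun q => u q j) p * A p j

/-- A field is smooth when it is C^∞ jointly in time and space. -/
def SmoothS (f : Pt → ℝ) : Prop := ContDiff ℝ (⊤ : ℕ∞) f

/-- A vector field is smooth when it is C^∞ jointly in time and space. -/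
def SmoothV (F : Pt → Vec3) : Prop := ContDiff ℝ (⊤ : ℕ∞) F

section ScalarCalculus

variable {f g : Pt → ℝ} {p : Pt}

theorem DifferentiableAt.spatialSlice (hf : DifferentiableAt ℝ f p) :
    DifferentiableAt ℝ (fun x => f (p.1, x)) p.2 :=
  hf.comp p.2 ((differentiableAt_const _).prodMk differentiableAt_id)

theorem DifferentiableAt.timeSlice (hf : DifferentiableAt ℝ f p) :
    DifferentiableAt ℝ (fun s => f (s, p.2)) p.1 :=
  hf.comp p.1 (differentiableAt_id.prodMk (differentiableAt_const _))

theorem pd_sub (hf : DifferentiableAt ℝ f p) (hg : DifferentiableAt ℝ g p) (i : Fin 3) :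
    pd i (fun q => f q - g q) p = pd i f p - pd i g p := by
  simp only [pd, fderiv_fun_sub hf.spatialSlice hg.spatialSlice, sub_apply]

theorem pd_mul (hf : DifferentiableAt ℝ f p) (hg : DifferentiableAt ℝ g p) (i : Fin 3) :
    pd i (fun q => f q * g q) p = pd i f p * g p + f p * pd i g p := by
  simp only [pd, fderiv_fun_mul hf.spatialSlice hg.spatialSlice, add_apply,
    smul_apply, smul_eq_mul]
  ring

theorem pd_inv (hf : DifferentiableAt ℝ f p) (hp : f p ≠ 0) (i : Fin 3) :
    pd i (fun q => (f q)⁻¹) p = -pd i f p / f p ^ 2 := by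
  have := ((hasDerivAt_inv hp).comp_hasFDerivAt p.2 hf.spatialSlice.hasFDerivAt).fderiv
  simp only [pd, Function.comp_def] at this ⊢
  rw [this]
  simp only [smul_apply, smul_eq_mul]
  ring

theorem dt_mul (hf : DifferentiableAt ℝ f p) (hg : DifferentiableAt ℝ g p) :
    dt (fun q => f q * g q) p = dt f p * g p + f p * dt g p :=
  deriv_fun_mul hf.timeSlice hg.timeSlice

theorem dt_inv (hf : DifferentiableAt ℝ f p) (hp : f p ≠ 0) :
    dt (fun q => (f q)⁻¹) p = -dt f p / f p ^ 2 :=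
  deriv_fun_inv'' hf.timeSlice hp

theorem contDiff_pd {n : WithTop ℕ∞} (hf : ContDiff ℝ (n + 1) f) (i : Fin 3) :
    ContDiff ℝ n (pd i f) := by
  have hslice : ∀ q : Pt, pd i f q = fderiv ℝ f q (0, Pi.single i 1) := by
    intro q
    have hinr : HasFDerivAt (fun x : Vec3 => ((q.1, x) : Pt))
        (ContinuousLinearMap.inr ℝ ℝ Vec3) q.2 :=
      (hasFDerivAt_const q.1 q.2).prodMk (hasFDerivAt_id q.2)
    have := ((hf.differentiable (by simp)).differentiableAt.hasFDerivAt.comp q.2 hinr).fderiv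
    rw [Function.comp_def] at this
    rw [pd, this]
    rfl
  rw [funext hslice]
  exact (hf.fderiv_right le_rfl).clm_apply contDiff_const

theorem pd_comm (hf : ContDiff ℝ 2 f) (i j : Fin 3) :
    pd i (pd j f) p = pd j (pd i f) p := by
  set g : Vec3 → ℝ := fun x => f (p.1, x)
  have hg : ContDiff ℝ 2 g := hf.comp (contDiff_const.prodMk contDiff_id)
  have hd2 : ∀ a b : Fin 3, pd a (pd b f) p
      = fderiv ℝ (fderiv ℝ g) p.2 (Pi.single a 1) (Pi.single b 1) := by
    intro a b
    have hD : DifferentiableAt ℝ (fderiv ℝ g) p.2 :=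
      (hg.fderiv_right (m := 1) le_rfl).differentiable one_ne_zero p.2
    change fderiv ℝ (fun x => fderiv ℝ g x (Pi.single b 1)) p.2 (Pi.single a 1) = _
    rw [fderiv_clm_apply hD (differentiableAt_const _)]
    simp
  rw [hd2, hd2]
  exact (hg.contDiffAt.isSymmSndFDerivAt (by simp)) _ _

end ScalarCalculus

section VectorCalculus

variable {f : Pt → ℝ} {A B F u : Pt → Vec3} {p : Pt}

theorem DifferentiableAt.component (hF : DifferentiableAt ℝ F p) (i : Fin 3) :
    DifferentiableAt ℝ (fun q => F q i) p :=
  differentiableAt_pi.1 hF i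

theorem dirD_inv (hf : DifferentiableAt ℝ f p) (hp : f p ≠ 0) :
    dirD u (fun q => (f q)⁻¹) p = -dirD u f p / f p ^ 2 := by
  simp only [dirD, pd_inv hf hp, neg_div, Finset.sum_div, ← Finset.sum_neg_distrib]
  refine Finset.sum_congr rfl fun i _ => ?_
  ring

theorem dtVec_smul (hf : DifferentiableAt ℝ f p) (hF : DifferentiableAt ℝ F p) :
    dtVec (fun q => f q • F q) p = dt f p • F p + f p • dtVec F p := by
  funext i
  exact dt_mul hf (hF.component i)

theorem dirDVec_smul_right (hf : DifferentiableAt ℝ f p) (hF : DifferentiableAt ℝ F p) :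
    dirDVec u (fun q => f q • F q) p = dirD u f p • F p + f p • dirDVec u F p := by
  funext j
  simp only [dirDVec, dirD, Pi.add_apply, Pi.smul_apply, smul_eq_mul, Finset.sum_mul,
    Finset.mul_sum, ← Finset.sum_add_distrib]
  refine Finset.sum_congr rfl fun i _ => ?_
  rw [pd_mul hf (hF.component j)]
  ring

theorem dirDVec_smul_left : dirDVec (fun q => f q • A q) F p = f p • dirDVec A F p := by
  funext j
  simp only [dirDVec, Pi.smul_apply, smul_eq_mul, Finset.mul_sum, mul_assoc]

theorem div3_smul (hf : DifferentiableAt ℝ f p) (hF : DifferentiableAt ℝ F p) :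
    div3 (fun q => f q • F q) p = dirD F f p + f p * div3 F p := by
  simp only [div3, dirD, Pi.smul_apply, smul_eq_mul, Finset.mul_sum, ← Finset.sum_add_distrib]
  refine Finset.sum_congr rfl fun i _ => ?_
  rw [pd_mul hf (hF.component i)]
  ring

theorem curl3_cross3 (hA : DifferentiableAt ℝ A p) (hB : DifferentiableAt ℝ B p) :
    curl3 (fun q => cross3 (A q) (B q)) p
      = div3 B p • A p - div3 A p • B p + dirDVec B A p - dirDVec A B p := by
  have hAB : ∀ i j, DifferentiableAt ℝ (fun q => A q i * B q j) p :=
    fun i j => (hA.component i).mul (hB.component j)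
  funext i
  fin_cases i <;>
  simp only [curl3, cross3, div3, dirDVec, Fin.sum_univ_three, Fin.isValue, Fin.zero_eta,
    Fin.mk_one, Fin.reduceFinMk, Matrix.cons_val, Matrix.cons_val_zero, Matrix.cons_val_one,
    Pi.sub_apply, Pi.add_apply, Pi.smul_apply, smul_eq_mul, pd_sub (hAB _ _) (hAB _ _),
    pd_mul (hA.component _) (hB.component _)] <;>
  ring

theorem div3_curl3_eq_zero (hF : ContDiff ℝ 2 F) : div3 (curl3 F) p = 0 := by
  have hpd : ∀ i j, DifferentiableAt ℝ (pd i fun q => F q j) p := fun i j =>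
    (contDiff_pd (n := 1) (contDiff_pi.1 hF j) i).differentiable one_ne_zero p
  have hcomm : ∀ i j k, pd i (pd j fun q => F q k) p = pd j (pd i fun q => F q k) p :=
    fun i j k => pd_comm (contDiff_pi.1 hF k) i j
  simp only [div3, curl3, Fin.sum_univ_three, Fin.isValue, Matrix.cons_val, Matrix.cons_val_zero,
    Matrix.cons_val_one, pd_sub (hpd _ _) (hpd _ _)]
  rw [hcomm 0 1, hcomm 1 2, hcomm 0 2]
  ring

theorem contDiff_curl3 {n : WithTop ℕ∞} (hF : ContDiff ℝ (n + 1) F) :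
    ContDiff ℝ n (curl3 F) := by
  have hpd : ∀ i j, ContDiff ℝ n (pd i fun q => F q j) := fun i j =>
    contDiff_pd (contDiff_pi.1 hF j) i
  refine contDiff_pi.2 fun i => ?_
  fin_cases i <;>
  simp only [curl3, Fin.isValue, Fin.zero_eta, Fin.mk_one, Fin.reduceFinMk, Matrix.cons_val,
    Matrix.cons_val_zero, Matrix.cons_val_one] <;>
  exact (hpd _ _).sub (hpd _ _)

end VectorCalculus

theorem specific_vorticity_evolution_general
    (u : Pt → Vec3) (ρ S T : Pt → ℝ)
    (hu : SmoothV u) (hρ : SmoothS ρ)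
    (hρpos : ∀ p : Pt, 0 < ρ p)
    (hvort : ∀ p : Pt,
      dtVec (fun q => curl3 u q) p
        - curl3 (fun q => cross3 (u q) (curl3 u q)) p
        = cross3 (grad3 T p) (grad3 S p))
    (hcont : ∀ p : Pt, dt ρ p + div3 (fun q => ρ q • u q) p = 0) :
    ∀ p : Pt,
      dtVec (fun q => (ρ q)⁻¹ • curl3 u q) p
        + dirDVec u (fun q => (ρ q)⁻¹ • curl3 u q) p
        - dirDVec (fun q => (ρ q)⁻¹ • curl3 u q) u p
        = (ρ p)⁻¹ • cross3 (grad3 T p) (grad3 S p) := by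
  intro p
  have hρ0 : ρ p ≠ 0 := (hρpos p).ne'
  have hu2 : ContDiff ℝ 2 u := hu.of_le (WithTop.coe_le_coe.2 le_top)
  have hu' : DifferentiableAt ℝ u p := hu2.differentiable two_ne_zero p
  have hρ' : DifferentiableAt ℝ ρ p := hρ.differentiable (by simp) p
  have hω : DifferentiableAt ℝ (curl3 u) p :=
    (contDiff_curl3 (n := 1) hu2).differentiable one_ne_zero p
  have hvort' : dtVec (curl3 u) p = dirDVec (curl3 u) u p - dirDVec u (curl3 u) p
      - div3 u p • curl3 u p + cross3 (grad3 T p) (grad3 S p) := by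
    rw [← hvort p, curl3_cross3 hu' hω, div3_curl3_eq_zero hu2]
    module
  have hcont' : dt ρ p + dirD u ρ p = -(ρ p * div3 u p) := by
    linear_combination hcont p - div3_smul hρ' hu'
  have hinv : -dt ρ p / ρ p ^ 2 + -dirD u ρ p / ρ p ^ 2 = div3 u p / ρ p := by
    field_simp
    linear_combination -hcont'
  rw [dtVec_smul (hρ'.fun_inv hρ0) hω, dirDVec_smul_right (hρ'.fun_inv hρ0) hω,
    dirDVec_smul_left, dt_inv hρ' hρ0, dirD_inv hρ' hρ0, hvort']
  linear_combination (norm := module) hinv • curl3 u p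

/-- vorticity equation and mass continuity imply
    (∂/∂t + u·∇)(ω/ρ) − ((ω/ρ)·∇)u = (∇T × ∇S)/ρ. -/
theorem specific_vorticity_evolution
    (u : Pt → Vec3) (ρ S T : Pt → ℝ)
    (hu : SmoothV u) (hρ : SmoothS ρ) (hS : SmoothS S) (hT : SmoothS T)
    (hρpos : ∀ p : Pt, 0 < ρ p)
    (hvort : ∀ p : Pt,
      dtVec (fun q => curl3 u q) p
        - curl3 (fun q => cross3 (u q) (curl3 u q)) p
        = cross3 (grad3 T p) (grad3 S p))
    (hcont : ∀ p : Pt, dt ρ p + div3 (fun q => ρ q • u q) p = 0) :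
    ∀ p : Pt,
      dtVec (fun q => (ρ q)⁻¹ • curl3 u q) p
        + dirDVec u (fun q => (ρ q)⁻¹ • curl3 u q) p
        - dirDVec (fun q => (ρ q)⁻¹ • curl3 u q) u p
        = (ρ p)⁻¹ • cross3 (grad3 T p) (grad3 S p) :=
  specific_vorticity_evolution_general u ρ S T hu hρ hρpos hvort hcont
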